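/- arXiv:2406.18217 — 2 statements merged into one kernel-verified Lean document; each statement's English description precedes it below -/
import Mathlib

section
/- Let γ > 0, let k₁, k₂ ∈ ℂ, and let p₁⁽¹⁾, p₁⁽²⁾, p₂⁽¹⁾, p₂⁽²⁾ : ℝ → ℂ be continuous and γ-periodic with p₁⁽²⁾ not identically zero. Suppose e^{i k₁ x}(p₁⁽¹⁾(x) + x·p₁⁽²⁾(x)) = e^{i k₂ x}(p₂⁽¹⁾(x) + x·p₂⁽²⁾(x)) for all x ∈ ℝ. Then Im(k₁) = Im(k₂), and for all x ∈ ℝ one has e^{i k₁ x}p₁⁽²⁾(x) = e^{i k₂ x}p₂⁽²⁾(x) and e^{i k₁ x}p₁⁽¹⁾(x) = e^{i k₂ x}p₂⁽¹⁾(x). -/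
open Complex

/-- if two representations `e^{ik₁x}(p₁⁽¹⁾ + x p₁⁽²⁾)` and
`e^{ik₂x}(p₂⁽¹⁾ + x p₂⁽²⁾)` with `γ`-periodic coefficients agree, then
`Im k₁ = Im k₂` and the corresponding pieces agree. -/
theorem growth_form_representations_agree
    (γ : ℝ) (hγ : 0 < γ) (k₁ k₂ : ℂ)
    (p₁₁ p₁₂ p₂₁ p₂₂ : ℝ → ℂ)
    (hp₁₁cont : Continuous p₁₁) (hp₁₂cont : Continuous p₁₂)
    (hp₂₁cont : Continuous p₂₁) (hp₂₂cont : Continuous p₂₂)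
    (hp₁₁per : ∀ x : ℝ, p₁₁ (x + γ) = p₁₁ x)
    (hp₁₂per : ∀ x : ℝ, p₁₂ (x + γ) = p₁₂ x)
    (hp₂₁per : ∀ x : ℝ, p₂₁ (x + γ) = p₂₁ x)
    (hp₂₂per : ∀ x : ℝ, p₂₂ (x + γ) = p₂₂ x)
    (hp₁₂ne : ∃ x : ℝ, p₁₂ x ≠ 0)
    (heq : ∀ x : ℝ,
      Complex.exp (Complex.I * k₁ * x) * (p₁₁ x + x * p₁₂ x)
      = Complex.exp (Complex.I * k₂ * x) * (p₂₁ x + x * p₂₂ x)) :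
    k₁.im = k₂.im ∧
    (∀ x : ℝ, Complex.exp (Complex.I * k₁ * x) * p₁₂ x
      = Complex.exp (Complex.I * k₂ * x) * p₂₂ x) ∧
    (∀ x : ℝ, Complex.exp (Complex.I * k₁ * x) * p₁₁ x
      = Complex.exp (Complex.I * k₂ * x) * p₂₁ x) := by
  set a := Complex.exp (Complex.I * k₁ * γ) with ha
  set b := Complex.exp (Complex.I * k₂ * γ) with hb
  have hγc : (γ : ℂ) ≠ 0 := by exact_mod_cast hγ.ne'
  have hane : a ≠ 0 := Complex.exp_ne_zero _
  have hE₁ : ∀ x : ℝ, Complex.exp (Complex.I * k₁ * ((x : ℂ) + γ))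
      = a * Complex.exp (Complex.I * k₁ * x) := by
    intro x; rw [ha, ← Complex.exp_add]; congr 1; ring
  have hE₂ : ∀ x : ℝ, Complex.exp (Complex.I * k₂ * ((x : ℂ) + γ))
      = b * Complex.exp (Complex.I * k₂ * x) := by
    intro x; rw [hb, ← Complex.exp_add]; congr 1; ring
  -- shifted equation
  have hS : ∀ x : ℝ,
      a * Complex.exp (Complex.I * k₁ * x) * (p₁₁ x + ((x : ℂ) + γ) * p₁₂ x)
      = b * Complex.exp (Complex.I * k₂ * x) * (p₂₁ x + ((x : ℂ) + γ) * p₂₂ x) := by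
    intro x
    have h1 := heq (x + γ)
    rw [hp₁₁per, hp₁₂per, hp₂₁per, hp₂₂per] at h1
    push_cast at h1
    rw [hE₁, hE₂] at h1
    exact h1
  -- key relation A
  have hA : ∀ x : ℝ,
      a * Complex.exp (Complex.I * k₁ * x) * γ * p₁₂ x
      = (b - a) * Complex.exp (Complex.I * k₂ * x) * (p₂₁ x + x * p₂₂ x)
        + b * Complex.exp (Complex.I * k₂ * x) * γ * p₂₂ x := by
    intro x
    linear_combination hS x - a * heq x
  -- shifted relation A
  have hSA : ∀ x : ℝ,
      a * (a * Complex.exp (Complex.I * k₁ * x)) * γ * p₁₂ x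
      = (b - a) * (b * Complex.exp (Complex.I * k₂ * x)) * (p₂₁ x + ((x : ℂ) + γ) * p₂₂ x)
        + b * (b * Complex.exp (Complex.I * k₂ * x)) * γ * p₂₂ x := by
    intro x
    have h1 := hA (x + γ)
    rw [hp₁₂per, hp₂₁per, hp₂₂per] at h1
    push_cast at h1
    rw [hE₁, hE₂] at h1
    exact h1
  have hC : ∀ x : ℝ,
      (a - b) * (a * Complex.exp (Complex.I * k₁ * x) * p₁₂ x
        + b * Complex.exp (Complex.I * k₂ * x) * p₂₂ x) * γ = 0 := by
    intro x
    linear_combination hSA x - b * hA x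
  have hab : a = b := by
    by_contra hab
    have habne : a - b ≠ 0 := sub_ne_zero.mpr hab
    -- from hC: p₂₂-piece is negative of p₁₂-piece
    have hB : ∀ x : ℝ, b * Complex.exp (Complex.I * k₂ * x) * p₂₂ x
        = -(a * Complex.exp (Complex.I * k₁ * x) * p₁₂ x) := by
      intro x
      have h2 : a * Complex.exp (Complex.I * k₁ * x) * p₁₂ x
          + b * Complex.exp (Complex.I * k₂ * x) * p₂₂ x = 0 := by
        rcases mul_eq_zero.mp (hC x) with h | h
        · rcases mul_eq_zero.mp h with h | h
          · exact absurd h habne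
          · exact h
        · exact absurd h hγc
      linear_combination h2
    -- derive: (b-a) p₁₁ x = (2aγ - (b-a)x) p₁₂ x
    have hD : ∀ x : ℝ, (b - a) * p₁₁ x = (2 * a * γ - (b - a) * x) * p₁₂ x := by
      intro x
      have hEne : Complex.exp (Complex.I * k₁ * x) ≠ 0 := Complex.exp_ne_zero _
      have key : Complex.exp (Complex.I * k₁ * x)
          * ((b - a) * p₁₁ x - (2 * a * γ - (b - a) * x) * p₁₂ x) = 0 := by
        linear_combination (b - a) * heq x - hA x - hB x * γ
      have := (mul_eq_zero.mp key).resolve_left hEne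
      linear_combination this
    obtain ⟨x₀, hx₀⟩ := hp₁₂ne
    have h1 := hD x₀
    have h2 := hD (x₀ + γ)
    rw [hp₁₁per, hp₁₂per] at h2
    push_cast at h2
    have h3 : (a - b) * γ * p₁₂ x₀ = 0 := by linear_combination h1 - h2
    rcases mul_eq_zero.mp h3 with h | h
    · rcases mul_eq_zero.mp h with h | h
      · exact habne h
      · exact hγc h
    · exact hx₀ h
  -- second conclusion
  have hsecond : ∀ x : ℝ, Complex.exp (Complex.I * k₁ * x) * p₁₂ x
      = Complex.exp (Complex.I * k₂ * x) * p₂₂ x := by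
    intro x
    have h1 := hA x
    rw [← hab] at h1
    have h2 : a * γ * (Complex.exp (Complex.I * k₁ * x) * p₁₂ x
        - Complex.exp (Complex.I * k₂ * x) * p₂₂ x) = 0 := by
      linear_combination h1
    have := (mul_eq_zero.mp h2).resolve_left (mul_ne_zero hane hγc)
    linear_combination this
  refine ⟨?_, hsecond, ?_⟩
  · -- equal absolute values of a, b force equal imaginary parts
    have habs : Real.exp (Complex.I * k₁ * γ).re = Real.exp (Complex.I * k₂ * γ).re := by
      rw [← Complex.norm_exp, ← Complex.norm_exp, ← ha, ← hb, hab]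
    have hre := Real.exp_injective habs
    simp [Complex.mul_re, Complex.mul_im, Complex.I_re, Complex.I_im] at hre
    exact hre.resolve_right hγ.ne'
  · intro x
    linear_combination heq x - (x : ℂ) * hsecond x
end

section
/- Define V : ℝ → ℝ and ψ : ℝ → ℝ piecewise by V(r) := 2/(r − n − 1)² − 2/(r − n − 1) and ψ(r) := e^r·(1 − r/(r − n − 1)) for n − 1 ≤ r < n, n ∈ ℤ. Then: (a) for every n ∈ ℤ and every r in the open interval (n − 1, n), ψ is twice differentiable at r and −ψ''(r) + V(r)ψ(r) = −ψ(r); and (b) there exist no k ∈ ℂ and no 1-periodic function p : ℝ → ℂ such that ψ(r) = e^{ikr}p(r) for all r ∈ ℝ; that is, ψ is a solution of the Schrödinger equation with 1-periodic potential V for the eigenvalue λ = −1 which is not a Bloch solution. -/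
open Complex

/-- The piecewise 1-periodic potential `V(r) = 2/(r-n-1)² - 2/(r-n-1)` for
`n - 1 ≤ r < n`, `n ∈ ℤ` (so that `n - 1 = ⌊r⌋`, i.e. `r - n - 1 = r - ⌊r⌋ - 2`). -/
noncomputable def Vpw (r : ℝ) : ℝ :=
  2 / (r - (⌊r⌋ : ℝ) - 2) ^ 2 - 2 / (r - (⌊r⌋ : ℝ) - 2)

/-- The piecewise function `ψ(r) = e^r (1 - r/(r-n-1))` for `n - 1 ≤ r < n`,
`n ∈ ℤ`. -/
noncomputable def psipw (r : ℝ) : ℝ :=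
  Real.exp r * (1 - r / (r - (⌊r⌋ : ℝ) - 2))

lemma key1 (c r : ℝ) (hrc : r - c ≠ 0) :
    HasDerivAt (fun x => -c * Real.exp x / (x - c))
      (-c * Real.exp r * (r - c - 1) / (r - c) ^ 2) r := by
  have h1 : HasDerivAt (fun x => -c * Real.exp x) (-c * Real.exp r) r :=
    (Real.hasDerivAt_exp r).const_mul (-c)
  have h2 : HasDerivAt (fun x : ℝ => x - c) 1 r := (hasDerivAt_id r).sub_const c
  have : HasDerivAt (fun x => -c * Real.exp x / (x - c)) _ r := h1.div h2 hrc
  convert this using 1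
  field_simp
  ring

lemma key2 (c r : ℝ) (hrc : r - c ≠ 0) :
    HasDerivAt (fun x => -c * Real.exp x * (x - c - 1) / (x - c) ^ 2)
      ((-c * Real.exp r * (r - c) * (r - c) ^ 2 -
        (-c * Real.exp r * (r - c - 1)) * (2 * (r - c))) / ((r - c) ^ 2) ^ 2) r := by
  have h1 : HasDerivAt (fun x => -c * Real.exp x * (x - c - 1))
      (-c * Real.exp r * (r - c)) r := by
    have ha : HasDerivAt (fun x => -c * Real.exp x) (-c * Real.exp r) r :=
      (Real.hasDerivAt_exp r).const_mul (-c)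
    have hb : HasDerivAt (fun x : ℝ => x - c - 1) 1 r :=
      ((hasDerivAt_id r).sub_const c).sub_const 1
    have : HasDerivAt (fun x => -c * Real.exp x * (x - c - 1)) _ r := ha.mul hb
    convert this using 1; ring
  have h2 : HasDerivAt (fun x : ℝ => (x - c) ^ 2) ((2 : ℕ) * (r - c) ^ 1 * 1) r :=
    ((hasDerivAt_id r).sub_const c).pow 2
  have h2' : HasDerivAt (fun x : ℝ => (x - c) ^ 2) (2 * (r - c)) r := by
    convert h2 using 1; push_cast; ring
  exact h1.div h2' (pow_ne_zero 2 hrc)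

lemma psipw_eq (n : ℤ) (x : ℝ) (hx : x ∈ Set.Ioo ((n : ℝ) - 1) (n : ℝ)) :
    psipw x = -((n : ℝ) + 1) * Real.exp x / (x - ((n : ℝ) + 1)) := by
  have hfl : ⌊x⌋ = n - 1 := by
    rw [Int.floor_eq_iff]
    constructor <;> push_cast <;> [linarith [hx.1]; linarith [hx.2]]
  have hne : x - ((n : ℝ) + 1) ≠ 0 := by
    have := hx.2; intro h; nlinarith
  rw [psipw, hfl]
  push_cast
  rw [show x - ((n : ℝ) - 1) - 2 = x - ((n : ℝ) + 1) from by ring]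
  field_simp
  ring

/-- `ψ` solves `-ψ'' + Vψ = -ψ` on each open interval `(n-1, n)`,
yet `ψ` is not a Bloch solution: it admits no representation `e^{ikr}p(r)` with
`p` 1-periodic. -/
theorem counterexample_not_bloch :
    (∀ n : ℤ, ∀ r : ℝ, (n : ℝ) - 1 < r → r < (n : ℝ) →
      DifferentiableAt ℝ psipw r ∧ DifferentiableAt ℝ (deriv psipw) r ∧
      -(deriv (deriv psipw) r) + Vpw r * psipw r = -psipw r) ∧
    ¬ ∃ (k : ℂ) (p : ℝ → ℂ), (∀ x : ℝ, p (x + 1) = p x) ∧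
      ∀ r : ℝ, (psipw r : ℂ) = Complex.exp (Complex.I * k * r) * p r := by
  constructor
  · intro n r hr1 hr2
    set c : ℝ := (n : ℝ) + 1 with hc
    have hrmem : r ∈ Set.Ioo ((n : ℝ) - 1) (n : ℝ) := ⟨hr1, hr2⟩
    have hs : Set.Ioo ((n : ℝ) - 1) (n : ℝ) ∈ nhds r := isOpen_Ioo.mem_nhds hrmem
    have hrc : r - c ≠ 0 := by intro h; rw [hc] at h; nlinarith
    have hEv : psipw =ᶠ[nhds r] fun x => -c * Real.exp x / (x - c) :=
      Filter.eventually_of_mem hs (fun x hx => psipw_eq n x hx)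
    have hd1 : HasDerivAt psipw (-c * Real.exp r * (r - c - 1) / (r - c) ^ 2) r :=
      (key1 c r hrc).congr_of_eventuallyEq hEv
    have hEv2 : deriv psipw =ᶠ[nhds r]
        fun x => -c * Real.exp x * (x - c - 1) / (x - c) ^ 2 := by
      refine Filter.eventually_of_mem hs (fun x hx => ?_)
      have hxc : x - c ≠ 0 := by
        have := hx.2; intro h; rw [hc] at h; nlinarith
      have hEvx : psipw =ᶠ[nhds x] fun y => -c * Real.exp y / (y - c) :=
        Filter.eventually_of_mem (isOpen_Ioo.mem_nhds hx) (fun y hy => psipw_eq n y hy)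
      exact ((key1 c x hxc).congr_of_eventuallyEq hEvx).deriv
    have hd2 : HasDerivAt (deriv psipw)
        ((-c * Real.exp r * (r - c) * (r - c) ^ 2 -
          (-c * Real.exp r * (r - c - 1)) * (2 * (r - c))) / ((r - c) ^ 2) ^ 2) r :=
      (key2 c r hrc).congr_of_eventuallyEq hEv2
    refine ⟨hd1.differentiableAt, hd2.differentiableAt, ?_⟩
    rw [hd2.deriv, psipw_eq n r hrmem]
    have hfl : ⌊r⌋ = n - 1 := by
      rw [Int.floor_eq_iff]
      constructor <;> push_cast <;> [linarith; linarith]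
    have hV : Vpw r = 2 / (r - c) ^ 2 - 2 / (r - c) := by
      rw [Vpw, hfl, hc]; push_cast; ring_nf
    rw [hV, ← hc]
    field_simp
    ring
  · rintro ⟨k, p, hp, hpsi⟩
    have h0 : psipw 0 = 1 := by norm_num [psipw]
    have h1 : psipw 1 = 3 / 2 * Real.exp 1 := by rw [psipw]; norm_num; ring
    have h2 : psipw 2 = 2 * Real.exp 2 := by rw [psipw]; norm_num; ring
    have e0 := hpsi 0
    have e1 := hpsi 1
    have e2 := hpsi 2
    rw [h0] at e0
    rw [h1] at e1
    rw [h2] at e2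
    simp only [Complex.ofReal_zero, mul_zero, Complex.exp_zero, one_mul] at e0
    have hp1 : p 1 = p 0 := by have := hp 0; norm_num at this; exact this
    have hp2 : p 2 = p 0 := by have := hp 1; norm_num at this; rw [this, hp1]
    rw [hp1, ← e0] at e1
    rw [hp2, ← e0] at e2
    simp only [Complex.ofReal_one, mul_one] at e1 e2
    have hk2 : Complex.exp (Complex.I * k * (2 : ℝ)) =
        Complex.exp (Complex.I * k) * Complex.exp (Complex.I * k) := by
      rw [← Complex.exp_add]; push_cast; ring_nf
    rw [hk2, ← e1] at e2
    have : (2 * Real.exp 2 : ℝ) = 3 / 2 * Real.exp 1 * (3 / 2 * Real.exp 1) := by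
      exact_mod_cast e2
    have he : Real.exp 2 = Real.exp 1 * Real.exp 1 := by
      rw [← Real.exp_add]; norm_num
    nlinarith [Real.exp_pos 1]
end
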